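/- arXiv:0906.1996 — 2 statements merged into one kernel-verified Lean document; each statement's English description precedes it below -/
import Mathlib

section
/- Let Γ : ℤ → ℝ and suppose f : [-π,π] → ℝ is continuous with 0 < m/(2π) ≤ f(φ) ≤ M/(2π) for all φ, and Γ(k) = ∫_{-π}^{π} e^{-ikφ} f(φ) dφ (interpreted as a real number). Then for every x ∈ ℝ, m ∑_{k=0}^n x^{2k} ≤ ∑_{k=0}^n ∑_{j=0}^n Γ(k-j) x^{k+j} ≤ M ∑_{k=0}^n x^{2k}. -/
open Real

lemma orth (d : ℤ) : (∫ φ in (-π)..π, Complex.exp (-Complex.I * (d : ℂ) * φ)) =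
    if d = 0 then (2 * π : ℂ) else 0 := by
  by_cases hd : d = 0
  · simp [hd, two_mul]
  · have hc : (-Complex.I * (d : ℂ)) ≠ 0 := by
      simp [Complex.I_ne_zero, hd]
    have h : (∫ φ in (-π)..π, Complex.exp ((-Complex.I * (d : ℂ)) * φ)) =
        (Complex.exp ((-Complex.I * (d:ℂ)) * (π:ℝ)) - Complex.exp ((-Complex.I * (d:ℂ)) * ((-π:ℝ):ℂ))) / (-Complex.I * (d:ℂ)) :=
      integral_exp_mul_complex hc
    simp only [mul_assoc] at h ⊢
    rw [h, if_neg hd]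
    have h1 : -Complex.I * ((d:ℂ) * ((π:ℝ):ℂ)) = ((-d : ℤ) : ℂ) * ((π:ℝ) * Complex.I) := by
      push_cast; ring
    have h2 : -Complex.I * ((d:ℂ) * ((-π:ℝ):ℂ)) = ((d : ℤ) : ℂ) * ((π:ℝ) * Complex.I) := by
      push_cast; ring
    rw [h1, h2, Complex.exp_int_mul, Complex.exp_int_mul, Complex.exp_pi_mul_I]
    have : ((-1 : ℂ)) ^ (-d) = ((-1:ℂ)) ^ d := by
      rw [zpow_neg]
      refine inv_eq_of_mul_eq_one_left ?_
      rw [← mul_zpow]; norm_num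
    rw [this, sub_self, zero_div]

set_option maxHeartbeats 1000000 in
theorem quadratic_form_squeeze (n : ℕ) (m M : ℝ) (f : ℝ → ℝ) (hm : 0 < m)
    (hf_cont : ContinuousOn f (Set.Icc (-π) π))
    (hlb : ∀ φ ∈ Set.Icc (-π) π, m / (2 * π) ≤ f φ)
    (hub : ∀ φ ∈ Set.Icc (-π) π, f φ ≤ M / (2 * π))
    (Γ : ℤ → ℝ)
    (hΓ : ∀ k : ℤ, (Γ k : ℂ) =
      ∫ φ in (-π)..π, Complex.exp (-Complex.I * (k : ℂ) * (φ : ℂ)) * (f φ : ℂ))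
    (x : ℝ) :
    m * ∑ k ∈ Finset.range (n + 1), x ^ (2 * k) ≤
      (∑ k ∈ Finset.range (n + 1), ∑ j ∈ Finset.range (n + 1),
        Γ ((k : ℤ) - (j : ℤ)) * x ^ (k + j)) ∧
    (∑ k ∈ Finset.range (n + 1), ∑ j ∈ Finset.range (n + 1),
        Γ ((k : ℤ) - (j : ℤ)) * x ^ (k + j)) ≤
      M * ∑ k ∈ Finset.range (n + 1), x ^ (2 * k) := by
  have hπ : (0:ℝ) < π := Real.pi_pos
  have hle : (-π : ℝ) ≤ π := by linarith
  have huIcc : Set.uIcc (-π) π = Set.Icc (-π) π := Set.uIcc_of_le hle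
  set S : ℝ → ℂ := fun φ => ∑ k ∈ Finset.range (n+1), (x:ℂ)^k * Complex.exp (-Complex.I * (k:ℕ) * φ) with hSdef
  have hScont : Continuous S := by
    apply continuous_finset_sum
    intro k _
    exact continuous_const.mul (Complex.continuous_exp.comp (by continuity))
  set F : ℝ → ℝ := fun φ => Complex.normSq (S φ) with hFdef
  have hFcont : Continuous F := Complex.continuous_normSq.comp hScont
  -- pointwise expansion
  have hpt : ∀ (k j : ℕ) (φ : ℝ),
      Complex.exp (-Complex.I * (((k:ℤ) - (j:ℤ) : ℤ) : ℂ) * φ) * (x:ℂ)^(k+j)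
        = ((x:ℂ)^k * Complex.exp (-Complex.I * (k:ℕ) * φ)) *
          (starRingEnd ℂ) ((x:ℂ)^j * Complex.exp (-Complex.I * (j:ℕ) * φ)) := by
    intro k j φ
    have hconj : (starRingEnd ℂ) ((x:ℂ)^j * Complex.exp (-Complex.I * (j:ℕ) * φ))
        = (x:ℂ)^j * Complex.exp (Complex.I * (j:ℕ) * φ) := by
      rw [map_mul, ← Complex.exp_conj]
      simp [map_mul, Complex.conj_I, map_pow, Complex.conj_ofReal]
    rw [hconj]
    have hexp : Complex.exp (-Complex.I * (((k:ℤ) - (j:ℤ) : ℤ) : ℂ) * φ)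
        = Complex.exp (-Complex.I * (k:ℕ) * φ) * Complex.exp (Complex.I * (j:ℕ) * φ) := by
      rw [← Complex.exp_add]; congr 1; push_cast; ring
    rw [hexp, pow_add]; ring
  set T : ℕ → ℕ → ℝ → ℂ := fun k j φ =>
    ((x:ℂ)^k * Complex.exp (-Complex.I * (k:ℕ) * φ)) *
      (starRingEnd ℂ) ((x:ℂ)^j * Complex.exp (-Complex.I * (j:ℕ) * φ)) * (f φ : ℂ)
    with hTdef
  have hfC : ContinuousOn (fun φ : ℝ => (f φ : ℂ)) (Set.Icc (-π) π) :=
    Complex.continuous_ofReal.comp_continuousOn hf_cont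
  have hTermInt : ∀ k j : ℕ, IntervalIntegrable (T k j) MeasureTheory.volume (-π) π := by
    intro k j
    apply ContinuousOn.intervalIntegrable
    rw [huIcc]
    exact (((continuous_const.mul (Complex.continuous_exp.comp (by continuity))).mul
      ((Complex.continuous_conj.comp (continuous_const.mul
        (Complex.continuous_exp.comp (by continuity)))))).continuousOn).mul hfC
  have hTcont : ∀ k j : ℕ, ContinuousOn (T k j) (Set.Icc (-π) π) := fun k j =>
    (((continuous_const.mul (Complex.continuous_exp.comp (by continuity))).mul
      ((Complex.continuous_conj.comp (continuous_const.mul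
        (Complex.continuous_exp.comp (by continuity)))))).continuousOn).mul hfC
  have hSumInt : ∀ k : ℕ, IntervalIntegrable
      (fun φ => ∑ j ∈ Finset.range (n+1), T k j φ) MeasureTheory.volume (-π) π := by
    intro k
    apply ContinuousOn.intervalIntegrable
    rw [huIcc]
    exact continuousOn_finset_sum _ fun j _ => hTcont k j
  have key1 : ((∑ k ∈ Finset.range (n+1), ∑ j ∈ Finset.range (n+1),
      Γ ((k:ℤ) - (j:ℤ)) * x^(k+j) : ℝ) : ℂ)
      = ∫ φ in (-π)..π, (F φ : ℂ) * (f φ : ℂ) := by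
    push_cast
    have hterm : ∀ k ∈ Finset.range (n+1), ∀ j ∈ Finset.range (n+1),
        (Γ ((k:ℤ)-(j:ℤ)) : ℂ) * (x:ℂ)^(k+j) = ∫ φ in (-π)..π, T k j φ := by
      intro k _ j _
      rw [hΓ, ← intervalIntegral.integral_mul_const]
      apply intervalIntegral.integral_congr
      intro φ _
      simp only [hTdef]
      rw [← hpt k j φ]
      push_cast
      ring
    calc (∑ k ∈ Finset.range (n+1), ∑ j ∈ Finset.range (n+1), (Γ ((k:ℤ)-(j:ℤ)) : ℂ) * (x:ℂ)^(k+j))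
        = ∑ k ∈ Finset.range (n+1), ∑ j ∈ Finset.range (n+1), ∫ φ in (-π)..π, T k j φ :=
          Finset.sum_congr rfl fun k hk => Finset.sum_congr rfl fun j hj => hterm k hk j hj
      _ = ∑ k ∈ Finset.range (n+1), ∫ φ in (-π)..π, ∑ j ∈ Finset.range (n+1), T k j φ :=
          Finset.sum_congr rfl fun k _ =>
            (intervalIntegral.integral_finset_sum fun j _ => hTermInt k j).symm
      _ = ∫ φ in (-π)..π, ∑ k ∈ Finset.range (n+1), ∑ j ∈ Finset.range (n+1), T k j φ :=
          (intervalIntegral.integral_finset_sum fun k _ => hSumInt k).symm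
      _ = ∫ φ in (-π)..π, (F φ : ℂ) * (f φ : ℂ) := by
          apply intervalIntegral.integral_congr
          intro φ _
          simp only [hTdef, hFdef, ← Complex.mul_conj, hSdef]
          simp only [map_sum, Finset.sum_mul_sum, Finset.sum_mul, Finset.mul_sum]
          rw [Finset.sum_comm]
  -- key2: value of ∫ F
  have hT0cont : ∀ k j : ℕ, Continuous (fun φ : ℝ =>
      ((x:ℂ)^k * Complex.exp (-Complex.I * (k:ℕ) * φ)) *
      (starRingEnd ℂ) ((x:ℂ)^j * Complex.exp (-Complex.I * (j:ℕ) * φ))) := fun k j =>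
    (continuous_const.mul (Complex.continuous_exp.comp (by continuity))).mul
      (Complex.continuous_conj.comp (continuous_const.mul
        (Complex.continuous_exp.comp (by continuity))))
  have key2C : (∫ φ in (-π)..π, ((F φ : ℝ) : ℂ))
      = 2*(π:ℂ) * ∑ k ∈ Finset.range (n+1), (x:ℂ)^(2*k) := by
    have h1 : ∀ k j : ℕ, (∫ φ in (-π)..π,
        ((x:ℂ)^k * Complex.exp (-Complex.I * (k:ℕ) * φ)) *
        (starRingEnd ℂ) ((x:ℂ)^j * Complex.exp (-Complex.I * (j:ℕ) * φ)))
        = (if ((k:ℤ) - (j:ℤ)) = 0 then (2*(π:ℝ):ℂ) else 0) * (x:ℂ)^(k+j) := by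
      intro k j
      rw [← orth ((k:ℤ)-(j:ℤ)), ← intervalIntegral.integral_mul_const]
      apply intervalIntegral.integral_congr
      intro φ _
      exact (hpt k j φ).symm
    calc (∫ φ in (-π)..π, ((F φ : ℝ):ℂ))
        = ∫ φ in (-π)..π, ∑ k ∈ Finset.range (n+1), ∑ j ∈ Finset.range (n+1),
            ((x:ℂ)^k * Complex.exp (-Complex.I * (k:ℕ) * φ)) *
            (starRingEnd ℂ) ((x:ℂ)^j * Complex.exp (-Complex.I * (j:ℕ) * φ)) := by
          apply intervalIntegral.integral_congr
          intro φ _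
          simp only [hFdef, ← Complex.mul_conj, hSdef]
          simp only [map_sum, Finset.sum_mul_sum]
      _ = ∑ k ∈ Finset.range (n+1), ∫ φ in (-π)..π, ∑ j ∈ Finset.range (n+1),
            ((x:ℂ)^k * Complex.exp (-Complex.I * (k:ℕ) * φ)) *
            (starRingEnd ℂ) ((x:ℂ)^j * Complex.exp (-Complex.I * (j:ℕ) * φ)) := by
          apply intervalIntegral.integral_finset_sum
          intro k _
          apply ContinuousOn.intervalIntegrable
          exact (continuous_finset_sum _ fun j _ => hT0cont k j).continuousOn
      _ = ∑ k ∈ Finset.range (n+1), ∑ j ∈ Finset.range (n+1), ∫ φ in (-π)..π,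
            ((x:ℂ)^k * Complex.exp (-Complex.I * (k:ℕ) * φ)) *
            (starRingEnd ℂ) ((x:ℂ)^j * Complex.exp (-Complex.I * (j:ℕ) * φ)) :=
          Finset.sum_congr rfl fun k _ =>
            intervalIntegral.integral_finset_sum fun j _ => (hT0cont k j).intervalIntegrable _ _
      _ = ∑ k ∈ Finset.range (n+1), ∑ j ∈ Finset.range (n+1),
            (if ((k:ℤ) - (j:ℤ)) = 0 then (2*(π:ℝ):ℂ) else 0) * (x:ℂ)^(k+j) :=
          Finset.sum_congr rfl fun k _ => Finset.sum_congr rfl fun j _ => h1 k j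
      _ = ∑ k ∈ Finset.range (n+1), (2*(π:ℝ):ℂ) * (x:ℂ)^(2*k) := by
          refine Finset.sum_congr rfl fun k hk => ?_
          rw [Finset.sum_eq_single k]
          · rw [if_pos (by omega), ← two_mul]
          · intro j _ hjk
            rw [if_neg (by omega), zero_mul]
          · intro hk'
            exact absurd hk hk'
      _ = 2*(π:ℂ) * ∑ k ∈ Finset.range (n+1), (x:ℂ)^(2*k) := by
          rw [← Finset.mul_sum]
  have key2 : (∫ φ in (-π)..π, F φ) = 2*π * ∑ k ∈ Finset.range (n+1), x^(2*k) := by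
    have h : ((∫ φ in (-π)..π, F φ : ℝ) : ℂ)
        = ((2*π * ∑ k ∈ Finset.range (n+1), x^(2*k) : ℝ) : ℂ) := by
      rw [← intervalIntegral.integral_ofReal, key2C]; push_cast; ring
    exact_mod_cast h
  -- real form of key1
  have key1R : (∑ k ∈ Finset.range (n+1), ∑ j ∈ Finset.range (n+1),
      Γ ((k:ℤ) - (j:ℤ)) * x^(k+j)) = ∫ φ in (-π)..π, F φ * f φ := by
    have h2 : (∫ φ in (-π)..π, (F φ:ℂ)*(f φ:ℂ))
        = ((∫ φ in (-π)..π, F φ * f φ : ℝ) : ℂ) := by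
      rw [← intervalIntegral.integral_ofReal]
      apply intervalIntegral.integral_congr
      intro φ _
      push_cast; ring
    exact_mod_cast key1.trans h2
  -- step 3: inequalities
  have hFnn : ∀ φ : ℝ, 0 ≤ F φ := fun φ => Complex.normSq_nonneg _
  have hInt_Ff : IntervalIntegrable (fun φ => F φ * f φ) MeasureTheory.volume (-π) π := by
    apply ContinuousOn.intervalIntegrable
    rw [huIcc]
    exact hFcont.continuousOn.mul hf_cont
  have hIntF : ∀ c : ℝ, IntervalIntegrable (fun φ => c * F φ) MeasureTheory.volume (-π) π :=
    fun c => (continuous_const.mul hFcont).intervalIntegrable _ _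
  have hπne : (2*π : ℝ) ≠ 0 := by positivity
  constructor
  · have h1 : (∫ φ in (-π)..π, (m/(2*π)) * F φ) ≤ ∫ φ in (-π)..π, F φ * f φ := by
      apply intervalIntegral.integral_mono_on hle (hIntF _) hInt_Ff
      intro φ hφ
      calc m/(2*π) * F φ = F φ * (m/(2*π)) := by ring
        _ ≤ F φ * f φ := mul_le_mul_of_nonneg_left (hlb φ hφ) (hFnn φ)
    rw [key1R]
    calc m * ∑ k ∈ Finset.range (n+1), x^(2*k)
        = (m/(2*π)) * (2*π * ∑ k ∈ Finset.range (n+1), x^(2*k)) := by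
          field_simp
      _ = (m/(2*π)) * ∫ φ in (-π)..π, F φ := by rw [key2]
      _ = ∫ φ in (-π)..π, (m/(2*π)) * F φ := (intervalIntegral.integral_const_mul _ _).symm
      _ ≤ ∫ φ in (-π)..π, F φ * f φ := h1
  · have h1 : (∫ φ in (-π)..π, F φ * f φ) ≤ ∫ φ in (-π)..π, (M/(2*π)) * F φ := by
      apply intervalIntegral.integral_mono_on hle hInt_Ff (hIntF _)
      intro φ hφ
      calc F φ * f φ ≤ F φ * (M/(2*π)) := mul_le_mul_of_nonneg_left (hub φ hφ) (hFnn φ)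
        _ = M/(2*π) * F φ := by ring
    rw [key1R]
    calc (∫ φ in (-π)..π, F φ * f φ)
        ≤ ∫ φ in (-π)..π, (M/(2*π)) * F φ := h1
      _ = (M/(2*π)) * ∫ φ in (-π)..π, F φ := intervalIntegral.integral_const_mul _ _
      _ = (M/(2*π)) * (2*π * ∑ k ∈ Finset.range (n+1), x^(2*k)) := by rw [key2]
      _ = M * ∑ k ∈ Finset.range (n+1), x^(2*k) := by
          field_simp
end

section
/- Let f : [-π,π] → ℝ be continuously differentiable. Then for all 0 < b ≤ π/2 and y > 0, |∫_0^b f(φ)/(φ² + y²) dφ − f(0)·(1/y)·arctan(b/y)| ≤ K·log(1 + b²/y²)/2 + K·b, where K = sup_{|φ| ≤ π} |f'(φ)|. -/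
/-!
By the mean value theorem `|f φ - f 0| ≤ K φ` on `[0, b] ⊆ [-π, π]`, and the constant part
`f 0 / (φ² + y²)` integrates exactly to `f 0 · arctan (b / y) / y`. The remainder is therefore
bounded by `K ∫₀ᵇ φ / (φ² + y²) dφ = K log (1 + b² / y²) / 2`.
-/

open Real Set intervalIntegral

section SpectralKernel

variable {b y : ℝ}

lemma integral_div_sq_add_sq_eq_log (hy : y ≠ 0) :
    ∫ φ in (0 : ℝ)..b, φ / (φ ^ 2 + y ^ 2) = log (1 + b ^ 2 / y ^ 2) / 2 := by
  have hpos : ∀ t : ℝ, 0 < t ^ 2 + y ^ 2 := fun t => by positivity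
  have hderiv : ∀ t : ℝ, HasDerivAt (fun s => log (s ^ 2 + y ^ 2) / 2)
      (t / (t ^ 2 + y ^ 2)) t := fun t => by
    refine ((((hasDerivAt_pow 2 t).add_const (y ^ 2)).log (hpos t).ne').div_const 2).congr_deriv
      ?_
    field_simp
    norm_num [mul_comm]
  have hint : IntervalIntegrable (fun t : ℝ => t / (t ^ 2 + y ^ 2)) MeasureTheory.volume 0 b :=
    (continuous_id.div (by fun_prop) fun t => (hpos t).ne').intervalIntegrable 0 b
  rw [integral_eq_sub_of_hasDerivAt (fun t _ => hderiv t) hint, ← sub_div, ← log_div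
    (hpos b).ne' (hpos 0).ne']
  congr 2
  field_simp
  ring

variable {g : ℝ → ℝ} {K : ℝ}

lemma abs_integral_sub_div_sq_add_sq_le (hb : 0 ≤ b) (hy : y ≠ 0)
    (hg : ContinuousOn g (Icc 0 b)) (hLip : ∀ φ ∈ Icc 0 b, |g φ - g 0| ≤ K * φ) :
    |∫ φ in (0 : ℝ)..b, (g φ - g 0) / (φ ^ 2 + y ^ 2)| ≤
      K * log (1 + b ^ 2 / y ^ 2) / 2 := by
  have hpos : ∀ t : ℝ, 0 < t ^ 2 + y ^ 2 := fun t => by positivity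
  have hcont : ContinuousOn (fun φ => (g φ - g 0) / (φ ^ 2 + y ^ 2)) (uIcc 0 b) := by
    rw [uIcc_of_le hb]
    exact (hg.sub continuousOn_const).div (by fun_prop) fun t _ => (hpos t).ne'
  have hint : IntervalIntegrable (fun φ : ℝ => K * (φ / (φ ^ 2 + y ^ 2)))
      MeasureTheory.volume 0 b :=
    ((continuous_id.div (by fun_prop) fun t => (hpos t).ne').const_mul K).intervalIntegrable
      0 b
  calc |∫ φ in (0 : ℝ)..b, (g φ - g 0) / (φ ^ 2 + y ^ 2)|
      ≤ ∫ φ in (0 : ℝ)..b, |(g φ - g 0) / (φ ^ 2 + y ^ 2)| :=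
        abs_integral_le_integral_abs hb
    _ ≤ ∫ φ in (0 : ℝ)..b, K * (φ / (φ ^ 2 + y ^ 2)) := by
        refine integral_mono_on hb hcont.abs.intervalIntegrable hint fun φ hφ => ?_
        rw [abs_div, abs_of_pos (hpos φ), ← mul_div_assoc]
        exact div_le_div_of_nonneg_right (hLip φ hφ) (hpos φ).le
    _ = K * log (1 + b ^ 2 / y ^ 2) / 2 := by
        rw [integral_const_mul, integral_div_sq_add_sq_eq_log hy, mul_div_assoc]

lemma abs_integral_div_sq_add_sq_sub_arctan_le (hb : 0 ≤ b) (hy : y ≠ 0)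
    (hg : ContinuousOn g (Icc 0 b)) (hLip : ∀ φ ∈ Icc 0 b, |g φ - g 0| ≤ K * φ) :
    |(∫ φ in (0 : ℝ)..b, g φ / (φ ^ 2 + y ^ 2)) - g 0 * (1 / y) * arctan (b / y)| ≤
      K * log (1 + b ^ 2 / y ^ 2) / 2 := by
  have hpos : ∀ t : ℝ, 0 < t ^ 2 + y ^ 2 := fun t => by positivity
  have hint : IntervalIntegrable (fun φ => g φ / (φ ^ 2 + y ^ 2))
      MeasureTheory.volume 0 b := by
    refine ContinuousOn.intervalIntegrable ?_
    rw [uIcc_of_le hb]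
    exact hg.div (by fun_prop) fun t _ => (hpos t).ne'
  have hconst :
      ∫ φ in (0 : ℝ)..b, g 0 / (φ ^ 2 + y ^ 2) = g 0 * (1 / y) * arctan (b / y) := by
    simp only [div_eq_mul_inv, integral_const_mul, add_comm _ (y ^ 2),
      integral_inv_sq_add_sq hy, zero_mul, arctan_zero, sub_zero, one_mul, mul_assoc]
  have hconst_int : IntervalIntegrable (fun φ : ℝ => g 0 / (φ ^ 2 + y ^ 2))
      MeasureTheory.volume 0 b :=
    (continuous_const.div (by fun_prop) fun t => (hpos t).ne').intervalIntegrable 0 b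
  rw [← hconst, ← integral_sub hint hconst_int]
  simpa only [sub_div] using abs_integral_sub_div_sq_add_sq_le hb hy hg hLip

end SpectralKernel

theorem first_order_spectral_approx (f : ℝ → ℝ)
    (hf : ContDiffOn ℝ 1 f (Set.Icc (-π) π)) (K : ℝ)
    (hK : ∀ φ ∈ Set.Icc (-π) π, |derivWithin f (Set.Icc (-π) π) φ| ≤ K)
    (b y : ℝ) (hb : 0 < b) (hbπ : b ≤ π / 2) (hy : 0 < y) :
    |(∫ φ in (0 : ℝ)..b, f φ / (φ ^ 2 + y ^ 2)) -
        f 0 * (1 / y) * Real.arctan (b / y)| ≤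
      K * Real.log (1 + b ^ 2 / y ^ 2) / 2 + K * b := by
  have h0 : (0 : ℝ) ∈ Icc (-π) π := ⟨by linarith [pi_pos], pi_pos.le⟩
  have hsub : Icc 0 b ⊆ Icc (-π) π :=
    Icc_subset_Icc (by linarith [pi_pos]) (by linarith [pi_pos])
  have hK0 : 0 ≤ K := (abs_nonneg _).trans (hK 0 h0)
  have hLip : ∀ φ ∈ Icc 0 b, |f φ - f 0| ≤ K * φ := fun φ hφ => by
    simpa [Real.norm_eq_abs, abs_of_nonneg hφ.1] using
      (convex_Icc (-π) π).norm_image_sub_le_of_norm_derivWithin_le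
        (hf.differentiableOn one_ne_zero) hK h0 (hsub hφ)
  calc _ ≤ K * log (1 + b ^ 2 / y ^ 2) / 2 :=
        abs_integral_div_sq_add_sq_sub_arctan_le hb.le hy.ne' (hf.continuousOn.mono hsub) hLip
    _ ≤ _ := le_add_of_nonneg_right (mul_nonneg hK0 hb.le)
end
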